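/- Let U ⊆ ℝ⁴ be open and convex with coordinates (u,v,x,y), let ξ_ℓ, ξ_n : U → ℝ and ξ_m : U → ℂ be smooth with ξ_m̄ := conjugate of ξ_m, satisfying the residual radiation-gauge conditions: ∂_u ξ_ℓ = 0; ∂_u ξ_m̄ − ∂_ζ ξ_ℓ = 0; ∂_u ξ_m − ∂_ζ̄ ξ_ℓ = 0; ∂_u ξ_n + ∂_v ξ_ℓ = 0; ∂_ζ̄ ξ_m̄ + ∂_ζ ξ_m = 0. Then for every point p ∈ U there are an open neighborhood W and smooth functions f₁, f₂, f₃, f₄ : W → ℂ with ∂_u f₁ = ∂_ζ̄ f₁ = 0, ∂_u f₂ = ∂_ζ f₂ = 0, ∂_u f₃ = 0, ∂_u f₄ = 0, such that on W: ξ_ℓ = f₁ + f₂, ξ_m̄ = u·∂_ζ f₁ + f₃, and ξ_n = −u·(∂_v f₁ + ∂_v f₂) + f₄. -/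

import Mathlib

/- Coordinates (u,v,x,y) = indices (0,1,2,3) on ℝ⁴;
   ζ = (x+iy)/√2, ∂_ζ = (∂_x − i∂_y)/√2, ∂_ζ̄ = (∂_x + i∂_y)/√2. -/

noncomputable section

abbrev V4 : Type := Fin 4 → ℝ

/-- Partial derivative of a complex-valued function in coordinate direction `i`. -/
def pdC (i : Fin 4) (f : V4 → ℂ) : V4 → ℂ :=
  fun x => fderiv ℝ f x (Pi.single i 1)

/-- Partial derivative of a real-valued function in coordinate direction `i`. -/
def pdR (i : Fin 4) (f : V4 → ℝ) : V4 → ℝ :=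
  fun x => fderiv ℝ f x (Pi.single i 1)

/-- Wirtinger derivative ∂_ζ = (∂_x - i ∂_y)/√2. -/
def pdZ (f : V4 → ℂ) : V4 → ℂ :=
  fun x => (pdC 2 f x - Complex.I * pdC 3 f x) / (Real.sqrt 2 : ℂ)

/-- Wirtinger derivative ∂_ζ̄ = (∂_x + i ∂_y)/√2. -/
def pdZb (f : V4 → ℂ) : V4 → ℂ :=
  fun x => (pdC 2 f x + Complex.I * pdC 3 f x) / (Real.sqrt 2 : ℂ)

/-- The coordinate function ζ = (x+iy)/√2. -/
def zeta (x : V4) : ℂ := ((x 2 : ℂ) + Complex.I * (x 3 : ℂ)) / (Real.sqrt 2 : ℂ)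

/-- The coordinate function ζ̄ = (x−iy)/√2. -/
def zbar (x : V4) : ℂ := ((x 2 : ℂ) - Complex.I * (x 3 : ℂ)) / (Real.sqrt 2 : ℂ)

/-!
Since `∂_u ξ_ℓ = 0`, the function `g := ∂_ζ ξ_ℓ` satisfies `∂_u g = 0`. Differentiating the last
equation in `u` and inserting the second and third gives `∂_ζ̄ g + ∂_ζ ∂_ζ̄ ξ_ℓ = 2 ∂_ζ̄ g = 0`, so
`g` is holomorphic in `ζ` with `(u, v)` as parameters. Near `p` it has a primitive of the same
kind, `F = (ζ - ζ(p)) ∫₀¹ g(u, v, ζ(p) + t (ζ - ζ(p))) dt` (smooth after cutting `g` off by a bump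
function), and then `f₁ = F`, `f₂ = ξ_ℓ - F`, `f₃ = ξ_m̄ - u ∂_ζ F`, `f₄ = ξ_n + u ∂_v ξ_ℓ`.
-/

open Metric MeasureTheory Set
open scoped ContDiff

section ParametricIntegral

universe u
variable {E : Type u} [NormedAddCommGroup E] [NormedSpace ℝ E] [ProperSpace E]

theorem hasFDerivAt_intervalIntegral_of_contDiff {F : Type*} [NormedAddCommGroup F]
    [NormedSpace ℝ F] {f : E → ℝ → F} (hf : ContDiff ℝ 1 ↿f) (a b : ℝ) (x₀ : E) :
    HasFDerivAt (fun x => ∫ t in a..b, f x t)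
      (∫ t in a..b, fderiv ℝ ↿f (x₀, t) ∘L ContinuousLinearMap.inl ℝ E ℝ) x₀ := by
  have hf' : Continuous fun q : E × ℝ => fderiv ℝ ↿f q ∘L ContinuousLinearMap.inl ℝ E ℝ :=
    (hf.continuous_fderiv one_ne_zero).clm_comp continuous_const
  obtain ⟨C, hC⟩ := ((isCompact_closedBall x₀ 1).prod (isCompact_uIcc (a := a) (b := b))
    ).exists_bound_of_continuousOn hf'.norm.continuousOn
  refine intervalIntegral.hasFDerivAt_integral_of_dominated_of_fderiv_le (μ := volume) (F := f)
    (F' := fun x t => fderiv ℝ ↿f (x, t) ∘L ContinuousLinearMap.inl ℝ E ℝ) (bound := fun _ => C)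
    (ball_mem_nhds x₀ one_pos) (.of_forall fun x => ?_) ?_ ?_ (.of_forall fun t ht x hx => ?_)
    intervalIntegrable_const (.of_forall fun t _ x _ => ?_)
  · exact (hf.continuous.comp (Continuous.prodMk_right x)).aestronglyMeasurable
  · exact (hf.continuous.comp (Continuous.prodMk_right x₀)).intervalIntegrable a b
  · exact (hf'.comp (Continuous.prodMk_right x₀)).aestronglyMeasurable
  · exact le_of_abs_le (hC (x, t) ⟨ball_subset_closedBall hx, uIoc_subset_uIcc ht⟩)
  · exact ((hf.differentiable one_ne_zero) (x, t)).hasFDerivAt.comp x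
      (hasFDerivAt_prodMk_left (𝕜 := ℝ) x t)

/-- `F` shares the universe of `E` because the induction passes to the derivative, a parametric
integral with values in `E →L[ℝ] F`. -/
theorem contDiff_intervalIntegral {F : Type u} [NormedAddCommGroup F] [NormedSpace ℝ F] {n : ℕ}
    {f : E → ℝ → F} (hf : ContDiff ℝ n ↿f) (a b : ℝ) :
    ContDiff ℝ n fun x => ∫ t in a..b, f x t := by
  induction n generalizing F with
  | zero =>
    exact contDiff_zero.2
      (intervalIntegral.continuous_parametric_intervalIntegral_of_continuous' hf.continuous a b)
  | succ n ih =>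
    refine contDiff_succ_iff_hasFDerivAt.2
      ⟨_, ih ?_, hasFDerivAt_intervalIntegral_of_contDiff (hf.of_le (by simp)) a b⟩
    exact (hf.fderiv_right (by norm_cast)).clm_comp contDiff_const

theorem contDiff_infty_intervalIntegral {F : Type u} [NormedAddCommGroup F] [NormedSpace ℝ F]
    {f : E → ℝ → F} (hf : ContDiff ℝ ∞ ↿f) (a b : ℝ) :
    ContDiff ℝ ∞ fun x => ∫ t in a..b, f x t :=
  contDiff_infty.2 fun n => contDiff_intervalIntegral (hf.of_le (by exact_mod_cast le_top)) a b

end ParametricIntegral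

theorem ContDiffOn.differentiableAt_of_isOpen {E F : Type*} [NormedAddCommGroup E]
    [NormedSpace ℝ E] [NormedAddCommGroup F] [NormedSpace ℝ F] {U : Set E} {f : E → F} {x : E}
    (hf : ContDiffOn ℝ ∞ f U) (hU : IsOpen U) (hx : x ∈ U) : DifferentiableAt ℝ f x :=
  (hf.contDiffAt (hU.mem_nhds hx)).differentiableAt (by simp)

theorem ContDiffOn.exists_contDiff_eqOn_ball {E F : Type*} [NormedAddCommGroup E]
    [NormedSpace ℝ E] [HasContDiffBump E] [NormedAddCommGroup F] [NormedSpace ℝ F]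
    {U : Set E} {f : E → F} {n : ℕ∞} (hU : IsOpen U) (hf : ContDiffOn ℝ n f U) {p : E}
    (hp : p ∈ U) : ∃ r > 0, ball p r ⊆ U ∧ ∃ g : E → F, ContDiff ℝ n g ∧ EqOn g f (ball p r) := by
  obtain ⟨ε, hε, hball⟩ := isOpen_iff.1 hU p hp
  let φ : ContDiffBump p := ⟨ε / 4, ε / 2, by positivity, by linarith⟩
  have hsupp : tsupport φ ⊆ U :=
    φ.tsupport_eq ▸ (closedBall_subset_ball (show ε / 2 < ε by linarith)).trans hball
  refine ⟨ε / 4, by positivity, (ball_subset_ball (by linarith)).trans hball,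
    fun x => φ x • f x, contDiff_iff_contDiffAt.2 fun x => ?_, fun x hx => ?_⟩
  · by_cases hx : x ∈ U
    · exact φ.contDiff.contDiffAt.smul ((hf.contDiffAt (hU.mem_nhds hx)))
    · have hφ : (φ : E → ℝ) =ᶠ[nhds x] 0 :=
        notMem_tsupport_iff_eventuallyEq.1 fun h => hx (hsupp h)
      exact contDiffAt_const (c := (0 : F)).congr_of_eventuallyEq
        (hφ.mono fun y hy => by simp [hy])
  · simp [φ.one_of_mem_closedBall (ball_subset_closedBall hx)]

section PartialDerivatives

variable {U : Set V4} {f g : V4 → ℂ} {x : V4}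

theorem pdC_congr (hU : IsOpen U) (h : EqOn f g U) (hx : x ∈ U) (i : Fin 4) :
    pdC i f x = pdC i g x := by
  simp only [pdC, (Filter.eventuallyEq_of_mem (hU.mem_nhds hx) h).fderiv_eq]

theorem pdC_const (i : Fin 4) (c : ℂ) : pdC i (fun _ => c) x = 0 := by
  simp [pdC]

theorem pdC_eq_zero_of_eqOn_zero (hU : IsOpen U) (h : ∀ y ∈ U, f y = 0) (hx : x ∈ U)
    (i : Fin 4) : pdC i f x = 0 :=
  (pdC_congr (g := fun _ => 0) hU h hx i).trans (pdC_const i 0)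

theorem pdC_add (hf : DifferentiableAt ℝ f x) (hg : DifferentiableAt ℝ g x) (i : Fin 4) :
    pdC i (fun y => f y + g y) x = pdC i f x + pdC i g x := by
  simp [pdC, fderiv_fun_add hf hg]

theorem pdC_sub (hf : DifferentiableAt ℝ f x) (hg : DifferentiableAt ℝ g x) (i : Fin 4) :
    pdC i (fun y => f y - g y) x = pdC i f x - pdC i g x := by
  simp [pdC, fderiv_fun_sub hf hg]

theorem pdC_mul (hf : DifferentiableAt ℝ f x) (hg : DifferentiableAt ℝ g x) (i : Fin 4) :
    pdC i (fun y => f y * g y) x = f x * pdC i g x + pdC i f x * g x := by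
  simp [pdC, fderiv_fun_mul hf hg, mul_comm]

theorem pdC_ofReal {a : V4 → ℝ} (ha : DifferentiableAt ℝ a x) (i : Fin 4) :
    pdC i (fun y => (a y : ℂ)) x = pdR i a x := by
  have hcomp : (fun y => (a y : ℂ)) = Complex.ofRealCLM ∘ a := rfl
  simp [pdC, pdR, hcomp, fderiv_comp x Complex.ofRealCLM.differentiableAt ha]

theorem pdC_coord (i j : Fin 4) : pdC i (fun y => (y j : ℂ)) x = if i = j then 1 else 0 := by
  have hproj : (fun y : V4 => y j) = ContinuousLinearMap.proj (R := ℝ) j := rfl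
  rw [pdC_ofReal (by fun_prop), pdR, hproj, ContinuousLinearMap.fderiv,
    ContinuousLinearMap.proj_apply]
  by_cases h : i = j
  · simp [h]
  · simp [h, Ne.symm h]

theorem ContDiffOn.pdC (hf : ContDiffOn ℝ ∞ f U) (hU : IsOpen U) (i : Fin 4) :
    ContDiffOn ℝ ∞ (pdC i f) U :=
  (hf.fderiv_of_isOpen hU (by simp)).clm_apply contDiffOn_const

theorem pdC_comm (hf : ContDiffOn ℝ ∞ f U) (hU : IsOpen U) (hx : x ∈ U) (i j : Fin 4) :
    pdC i (pdC j f) x = pdC j (pdC i f) x := by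
  have hf' := (hf.fderiv_of_isOpen hU (m := ∞) (by simp)).differentiableAt_of_isOpen hU hx
  have hsymm := second_derivative_symmetric_of_eventually
    (Filter.eventually_of_mem (hU.mem_nhds hx) fun y hy =>
      (hf.differentiableAt_of_isOpen hU hy).hasFDerivAt) hf'.hasFDerivAt
  have hsecond : ∀ k l : Fin 4,
      pdC k (pdC l f) x = fderiv ℝ (fderiv ℝ f) x (Pi.single k 1) (Pi.single l 1) := by
    intro k l
    have hpd : pdC l f = fun y => fderiv ℝ f y (Pi.single l 1) := rfl
    rw [pdC, hpd, fderiv_clm_apply hf' (differentiableAt_const _)]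
    simp
  rw [hsecond, hsecond, hsymm]

theorem pdC_intervalIntegral {f : V4 → ℝ → ℂ} (hf : ContDiff ℝ 1 ↿f) (a b : ℝ) (i : Fin 4)
    (x : V4) : pdC i (fun y => ∫ t in a..b, f y t) x = ∫ t in a..b, pdC i (fun y => f y t) x := by
  have hcont : Continuous fun t => fderiv ℝ ↿f (x, t) ∘L ContinuousLinearMap.inl ℝ V4 ℝ :=
    ((hf.continuous_fderiv one_ne_zero).comp (Continuous.prodMk_right x)).clm_comp
      continuous_const
  rw [pdC, (hasFDerivAt_intervalIntegral_of_contDiff hf a b x).fderiv,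
    ContinuousLinearMap.intervalIntegral_apply (hcont.intervalIntegrable a b)]
  refine intervalIntegral.integral_congr fun t _ => ?_
  have hpartial : HasFDerivAt (fun y => f y t)
      (fderiv ℝ ↿f (x, t) ∘L ContinuousLinearMap.inl ℝ V4 ℝ) x :=
    ((hf.differentiable one_ne_zero (x, t)).hasFDerivAt.comp x
      (hasFDerivAt_prodMk_left (𝕜 := ℝ) x t) :)
  rw [pdC, hpartial.fderiv]

end PartialDerivatives

section Wirtinger

theorem ofReal_sqrt_two_ne_zero : ((Real.sqrt 2 : ℝ) : ℂ) ≠ 0 := by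
  norm_cast
  positivity

theorem ofReal_sqrt_two_sq : ((Real.sqrt 2 : ℝ) : ℂ) ^ 2 = 2 := by
  norm_cast
  exact Real.sq_sqrt zero_le_two

variable {U : Set V4} {f g : V4 → ℂ} {x : V4}

theorem pdZ_congr (hU : IsOpen U) (h : EqOn f g U) (hx : x ∈ U) : pdZ f x = pdZ g x := by
  simp only [pdZ, pdC_congr hU h hx]

theorem pdZb_congr (hU : IsOpen U) (h : EqOn f g U) (hx : x ∈ U) : pdZb f x = pdZb g x := by
  simp only [pdZb, pdC_congr hU h hx]

theorem pdZ_sub (hf : DifferentiableAt ℝ f x) (hg : DifferentiableAt ℝ g x) :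
    pdZ (fun y => f y - g y) x = pdZ f x - pdZ g x := by
  simp only [pdZ, pdC_sub hf hg]
  ring

theorem pdZ_mul (hf : DifferentiableAt ℝ f x) (hg : DifferentiableAt ℝ g x) :
    pdZ (fun y => f y * g y) x = f x * pdZ g x + pdZ f x * g x := by
  simp only [pdZ, pdC_mul hf hg]
  ring

theorem pdZb_mul (hf : DifferentiableAt ℝ f x) (hg : DifferentiableAt ℝ g x) :
    pdZb (fun y => f y * g y) x = f x * pdZb g x + pdZb f x * g x := by
  simp only [pdZb, pdC_mul hf hg]
  ring

theorem ContDiffOn.pdZ (hf : ContDiffOn ℝ ∞ f U) (hU : IsOpen U) : ContDiffOn ℝ ∞ (pdZ f) U :=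
  ((hf.pdC hU 2).sub (contDiffOn_const.mul (hf.pdC hU 3))).div_const _

theorem ContDiffOn.pdZb (hf : ContDiffOn ℝ ∞ f U) (hU : IsOpen U) : ContDiffOn ℝ ∞ (pdZb f) U :=
  ((hf.pdC hU 2).add (contDiffOn_const.mul (hf.pdC hU 3))).div_const _

theorem pdC_pdZ_eq (hf : ContDiffOn ℝ ∞ f U) (hU : IsOpen U) (hx : x ∈ U) (i : Fin 4) :
    pdC i (pdZ f) x = (pdC i (pdC 2 f) x - Complex.I * pdC i (pdC 3 f) x) / (Real.sqrt 2 : ℂ) := by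
  have h2 := ((hf.pdC hU 2).differentiableAt_of_isOpen hU hx).hasFDerivAt
  have h3 := ((hf.pdC hU 3).differentiableAt_of_isOpen hU hx).hasFDerivAt
  have hd := (h2.fun_sub (h3.const_mul Complex.I)).mul_const ((Real.sqrt 2 : ℂ)⁻¹)
  have hfun : pdZ f = fun y => (pdC 2 f y - Complex.I * pdC 3 f y) * (Real.sqrt 2 : ℂ)⁻¹ :=
    funext fun y => div_eq_mul_inv _ _
  change fderiv ℝ (pdZ f) x (Pi.single i 1) = _
  rw [hfun, hd.fderiv]
  simp [pdC, div_eq_mul_inv, mul_comm]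

theorem pdC_pdZb_eq (hf : ContDiffOn ℝ ∞ f U) (hU : IsOpen U) (hx : x ∈ U) (i : Fin 4) :
    pdC i (pdZb f) x = (pdC i (pdC 2 f) x + Complex.I * pdC i (pdC 3 f) x) / (Real.sqrt 2 : ℂ) := by
  have h2 := ((hf.pdC hU 2).differentiableAt_of_isOpen hU hx).hasFDerivAt
  have h3 := ((hf.pdC hU 3).differentiableAt_of_isOpen hU hx).hasFDerivAt
  have hd := (h2.fun_add (h3.const_mul Complex.I)).mul_const ((Real.sqrt 2 : ℂ)⁻¹)
  have hfun : pdZb f = fun y => (pdC 2 f y + Complex.I * pdC 3 f y) * (Real.sqrt 2 : ℂ)⁻¹ :=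
    funext fun y => div_eq_mul_inv _ _
  change fderiv ℝ (pdZb f) x (Pi.single i 1) = _
  rw [hfun, hd.fderiv]
  simp [pdC, div_eq_mul_inv, mul_comm, mul_add]

theorem pdC_pdZ (hf : ContDiffOn ℝ ∞ f U) (hU : IsOpen U) (hx : x ∈ U) (i : Fin 4) :
    pdC i (pdZ f) x = pdZ (pdC i f) x := by
  rw [pdC_pdZ_eq hf hU hx, pdC_comm hf hU hx i 2, pdC_comm hf hU hx i 3, pdZ]

theorem pdC_pdZb (hf : ContDiffOn ℝ ∞ f U) (hU : IsOpen U) (hx : x ∈ U) (i : Fin 4) :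
    pdC i (pdZb f) x = pdZb (pdC i f) x := by
  rw [pdC_pdZb_eq hf hU hx, pdC_comm hf hU hx i 2, pdC_comm hf hU hx i 3, pdZb]

theorem pdZ_pdZb (hf : ContDiffOn ℝ ∞ f U) (hU : IsOpen U) (hx : x ∈ U) :
    pdZ (pdZb f) x = pdZb (pdZ f) x := by
  simp only [pdZ, pdZb, pdC_pdZ_eq hf hU hx, pdC_pdZb_eq hf hU hx, pdC_comm hf hU hx 3 2]
  ring

theorem fderiv_apply_eq_wirtinger (f : V4 → ℂ) (x v : V4) :
    fderiv ℝ f x v = v 0 * pdC 0 f x + v 1 * pdC 1 f x + zeta v * pdZ f x + zbar v * pdZb f x := by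
  conv_lhs => rw [pi_eq_sum_univ' v]
  simp only [Fin.sum_univ_four, map_add, map_smul, zeta, zbar, pdZ, pdZb, pdC, Complex.real_smul]
  field_simp [ofReal_sqrt_two_ne_zero]
  linear_combination (fderiv ℝ f x (Pi.single 2 1) * v 2 + fderiv ℝ f x (Pi.single 3 1) * v 3) *
    ofReal_sqrt_two_sq
    + 2 * ((v 3 : ℂ) * fderiv ℝ f x (Pi.single 3 1)) * Complex.I_sq

end Wirtinger

section Zeta

def zetaCLM : V4 →L[ℝ] ℂ :=
  LinearMap.toContinuousLinearMap
    { toFun := zeta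
      map_add' := fun v w => by simp only [zeta, Pi.add_apply, Complex.ofReal_add]; ring
      map_smul' := fun c v => by
        simp only [zeta, Pi.smul_apply, smul_eq_mul, Complex.ofReal_mul, RingHom.id_apply,
          Complex.real_smul]
        ring }

@[simp]
theorem zetaCLM_apply (v : V4) : zetaCLM v = zeta v := rfl

variable (p : V4) {x : V4}

theorem contDiff_zeta_sub : ContDiff ℝ ∞ fun y => zeta y - zeta p :=
  zetaCLM.contDiff.sub contDiff_const

theorem pdC_zeta_sub (i : Fin 4) : pdC i (fun y => zeta y - zeta p) x = zeta (Pi.single i 1) := by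
  have h : HasFDerivAt (fun y => zeta y - zeta p) zetaCLM x :=
    zetaCLM.hasFDerivAt.sub_const (zeta p)
  simp [pdC, h.fderiv]

theorem pdZ_zeta_sub : pdZ (fun y => zeta y - zeta p) x = 1 := by
  rw [pdZ, pdC_zeta_sub, pdC_zeta_sub]
  simp only [zeta]
  field_simp [ofReal_sqrt_two_ne_zero]
  simp
  linear_combination -ofReal_sqrt_two_sq

theorem pdZb_zeta_sub : pdZb (fun y => zeta y - zeta p) x = 0 := by
  rw [pdZb, pdC_zeta_sub, pdC_zeta_sub]
  simp only [zeta]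
  field_simp [ofReal_sqrt_two_ne_zero]
  simp

theorem pdC_zero_zeta_sub : pdC 0 (fun y => zeta y - zeta p) x = 0 := by
  rw [pdC_zeta_sub]
  simp [zeta]

end Zeta

section PlaneAverage

def planeScale (t : ℝ) (i : Fin 4) : ℝ := if i = 2 ∨ i = 3 then t else 1

def planeContract (p x : V4) (t : ℝ) : V4 := fun i => p i + planeScale t i * (x i - p i)

def planeAverage (G : V4 → ℂ) (p x : V4) : ℂ := ∫ t in (0 : ℝ)..1, G (planeContract p x t)

variable (p : V4) {x : V4}

@[simp]
theorem planeScale_two (t : ℝ) : planeScale t 2 = t := by simp [planeScale]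

@[simp]
theorem planeScale_three (t : ℝ) : planeScale t 3 = t := by simp [planeScale]

theorem planeContract_one (x : V4) : planeContract p x 1 = x := by
  ext i
  simp [planeContract, planeScale]

theorem contDiff_planeContract : ContDiff ℝ ∞ fun q : V4 × ℝ => planeContract p q.1 q.2 := by
  refine contDiff_pi.2 fun i => ?_
  simp only [planeContract, planeScale]
  split_ifs <;> fun_prop

theorem planeContract_mem_ball {r : ℝ} (hx : x ∈ ball p r) {t : ℝ} (ht : t ∈ Icc (0 : ℝ) 1) :
    planeContract p x t ∈ ball p r := by
  have hr := pos_of_mem_ball hx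
  rw [mem_ball, dist_pi_lt_iff hr] at hx ⊢
  intro i
  have hscale : |planeScale t i| ≤ 1 := by
    unfold planeScale
    split_ifs
    · exact abs_le.2 ⟨by linarith [ht.1], ht.2⟩
    · simp
  calc dist (planeContract p x t i) (p i) = |planeScale t i| * dist (x i) (p i) := by
        simp [planeContract, Real.dist_eq]
    _ ≤ 1 * dist (x i) (p i) := by gcongr
    _ < r := by simpa using hx i

theorem pdC_comp_planeContract {G : V4 → ℂ} {t : ℝ}
    (hG : DifferentiableAt ℝ G (planeContract p x t)) (i : Fin 4) :
    pdC i (fun y => G (planeContract p y t)) x =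
      planeScale t i * pdC i G (planeContract p x t) := by
  let L : V4 →L[ℝ] V4 := ContinuousLinearMap.pi fun j =>
    planeScale t j • ContinuousLinearMap.proj (R := ℝ) (φ := fun _ : Fin 4 => ℝ) j
  have hc : HasFDerivAt (fun y => planeContract p y t) L x :=
    hasFDerivAt_pi.2 fun j => by
      change HasFDerivAt (fun y : V4 => p j + planeScale t j * (y j - p j)) _ x
      exact (((hasFDerivAt_apply j x).sub_const (p j)).const_mul _).const_add (p j)
  have hsingle : L (Pi.single i 1) = planeScale t i • (Pi.single i 1 : V4) := by
    ext j
    by_cases h : j = i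
    · subst h; simp [L]
    · simp [L, h]
  have hcomp : HasFDerivAt (fun y => G (planeContract p y t)) _ x := hG.hasFDerivAt.comp x hc
  rw [pdC, hcomp.fderiv, ContinuousLinearMap.comp_apply, hsingle, map_smul,
    Complex.real_smul, pdC]

theorem hasDerivAt_planeContract (x : V4) (t : ℝ) :
    HasDerivAt (planeContract p x) (fun i => if i = 2 ∨ i = 3 then x i - p i else 0) t := by
  refine hasDerivAt_pi.2 fun i => ?_
  simp only [planeContract, planeScale]
  split_ifs
  · simpa using ((hasDerivAt_id t).mul_const (x i - p i)).const_add (p i)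
  · exact hasDerivAt_const t _

variable {G : V4 → ℂ}

theorem ContDiff.planeAverage (hG : ContDiff ℝ ∞ G) : ContDiff ℝ ∞ (planeAverage G p) :=
  contDiff_infty_intervalIntegral (f := fun y t => G (planeContract p y t))
    (hG.comp (contDiff_planeContract p)) 0 1

theorem pdC_planeAverage (hG : ContDiff ℝ ∞ G) (i : Fin 4) (x : V4) :
    pdC i (planeAverage G p) x =
      ∫ t in (0 : ℝ)..1, (planeScale t i : ℂ) * pdC i G (planeContract p x t) := by
  rw [show planeAverage G p = fun y => ∫ t in (0 : ℝ)..1, G (planeContract p y t) from rfl,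
    pdC_intervalIntegral (f := fun y t => G (planeContract p y t))
    ((hG.comp (contDiff_planeContract p)).of_le (by simp)) 0 1 i x]
  exact intervalIntegral.integral_congr fun t _ =>
    pdC_comp_planeContract p (hG.differentiable (by simp) _) i

theorem continuous_pdC_comp_planeContract (hG : ContDiff ℝ ∞ G) (i : Fin 4) (x : V4) :
    Continuous fun t => pdC i G (planeContract p x t) :=
  ((hG.continuous_fderiv (by simp)).clm_apply continuous_const).comp
    ((contDiff_planeContract p).continuous.comp (Continuous.prodMk_right x))

theorem intervalIntegrable_ofReal_mul_pdC_comp_planeContract (hG : ContDiff ℝ ∞ G) (i : Fin 4)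
    (x : V4) :
    IntervalIntegrable (fun t : ℝ => (t : ℂ) * pdC i G (planeContract p x t)) volume 0 1 :=
  (Complex.continuous_ofReal.mul
    (continuous_pdC_comp_planeContract p hG i x)).intervalIntegrable 0 1

theorem pdC_planeAverage_eq_zero (hG : ContDiff ℝ ∞ G) {i : Fin 4} {r : ℝ}
    (hGi : ∀ y ∈ ball p r, pdC i G y = 0) (hx : x ∈ ball p r) :
    pdC i (planeAverage G p) x = 0 := by
  rw [pdC_planeAverage p hG]
  refine (intervalIntegral.integral_congr fun t ht => ?_).trans intervalIntegral.integral_zero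
  rw [uIcc_of_le zero_le_one] at ht
  simp [hGi _ (planeContract_mem_ball p hx ht)]

theorem pdZ_planeAverage (hG : ContDiff ℝ ∞ G) (x : V4) :
    pdZ (planeAverage G p) x = ∫ t in (0 : ℝ)..1, (t : ℂ) * pdZ G (planeContract p x t) := by
  have hint i := intervalIntegrable_ofReal_mul_pdC_comp_planeContract p hG i x
  simp only [pdZ, pdC_planeAverage p hG, planeScale_two, planeScale_three]
  rw [← intervalIntegral.integral_const_mul,
    ← intervalIntegral.integral_sub (hint 2) ((hint 3).const_mul _),
    ← intervalIntegral.integral_div]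
  congr 1
  ext t
  ring

theorem pdZb_planeAverage (hG : ContDiff ℝ ∞ G) (x : V4) :
    pdZb (planeAverage G p) x = ∫ t in (0 : ℝ)..1, (t : ℂ) * pdZb G (planeContract p x t) := by
  have hint i := intervalIntegrable_ofReal_mul_pdC_comp_planeContract p hG i x
  simp only [pdZb, pdC_planeAverage p hG, planeScale_two, planeScale_three]
  rw [← intervalIntegral.integral_const_mul,
    ← intervalIntegral.integral_add (hint 2) ((hint 3).const_mul _),
    ← intervalIntegral.integral_div]
  congr 1
  ext t
  ring

theorem pdZb_planeAverage_eq_zero (hG : ContDiff ℝ ∞ G) {r : ℝ}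
    (hGzb : ∀ y ∈ ball p r, pdZb G y = 0) (hx : x ∈ ball p r) :
    pdZb (planeAverage G p) x = 0 := by
  rw [pdZb_planeAverage p hG]
  refine (intervalIntegral.integral_congr fun t ht => ?_).trans intervalIntegral.integral_zero
  rw [uIcc_of_le zero_le_one] at ht
  simp [hGzb _ (planeContract_mem_ball p hx ht)]

/-- Integrate `d/dt (t G(c t)) = G(c t) + (ζ - ζ(p)) t ∂_ζ G(c t)` over `[0, 1]`, where
`c t = planeContract p x t`; the `∂_ζ̄ G` term of the chain rule vanishes. -/
theorem zeta_sub_mul_pdZ_planeAverage (hG : ContDiff ℝ ∞ G) {r : ℝ}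
    (hGzb : ∀ y ∈ ball p r, pdZb G y = 0) (hx : x ∈ ball p r) :
    (zeta x - zeta p) * pdZ (planeAverage G p) x = G x - planeAverage G p x := by
  have hderiv : ∀ t ∈ uIcc (0 : ℝ) 1,
      HasDerivAt (fun t : ℝ => (t : ℂ) * G (planeContract p x t))
        (G (planeContract p x t) + (zeta x - zeta p) * ((t : ℂ) * pdZ G (planeContract p x t)))
        t := by
    intro t ht
    rw [uIcc_of_le zero_le_one] at ht
    have hGc := ((hG.differentiable (by simp)) _).hasFDerivAt.comp_hasDerivAt t
      (hasDerivAt_planeContract p x t)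
    have hdir : fderiv ℝ G (planeContract p x t) (fun i => if i = 2 ∨ i = 3 then x i - p i else 0)
        = (zeta x - zeta p) * pdZ G (planeContract p x t) := by
      rw [fderiv_apply_eq_wirtinger, hGzb _ (planeContract_mem_ball p hx ht)]
      simp only [zeta, mul_zero, add_zero]
      rw [if_neg (by decide), if_neg (by decide), if_pos (by decide), if_pos (by decide)]
      push_cast
      ring
    refine ((hasDerivAt_id t).ofReal_comp.mul hGc).congr_deriv ?_
    rw [hdir]
    simp
    ring
  have hcont : Continuous fun t => G (planeContract p x t) :=
    hG.continuous.comp ((contDiff_planeContract p).continuous.comp (Continuous.prodMk_right x))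
  have hZcont : Continuous fun t : ℝ => (t : ℂ) * pdZ G (planeContract p x t) :=
    Complex.continuous_ofReal.mul (((continuous_pdC_comp_planeContract p hG 2 x).sub
      (continuous_const.mul (continuous_pdC_comp_planeContract p hG 3 x))).div_const _)
  have hZint := (hZcont.intervalIntegrable (μ := volume) 0 1).const_mul (zeta x - zeta p)
  have hftc := intervalIntegral.integral_eq_sub_of_hasDerivAt hderiv
    ((hcont.intervalIntegrable 0 1).add hZint)
  rw [intervalIntegral.integral_add (hcont.intervalIntegrable 0 1) hZint,
    intervalIntegral.integral_const_mul,
    ← pdZ_planeAverage p hG] at hftc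
  simp only [Complex.ofReal_one, one_mul, planeContract_one, Complex.ofReal_zero, zero_mul,
    sub_zero] at hftc
  rw [← hftc, planeAverage]
  ring

theorem exists_pdZ_primitive (hG : ContDiff ℝ ∞ G) {r : ℝ}
    (hGu : ∀ y ∈ ball p r, pdC 0 G y = 0) (hGzb : ∀ y ∈ ball p r, pdZb G y = 0) :
    ∃ F : V4 → ℂ, ContDiff ℝ ∞ F ∧
      ∀ x ∈ ball p r, pdC 0 F x = 0 ∧ pdZb F x = 0 ∧ pdZ F x = G x := by
  have hζ := (contDiff_zeta_sub p).differentiable (by simp)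
  have hh := (hG.planeAverage p).differentiable (by simp)
  refine ⟨fun y => (zeta y - zeta p) * planeAverage G p y,
    (contDiff_zeta_sub p).mul (hG.planeAverage p), fun x hx => ⟨?_, ?_, ?_⟩⟩
  · rw [pdC_mul (hζ x) (hh x), pdC_planeAverage_eq_zero p hG hGu hx, pdC_zero_zeta_sub]
    ring
  · rw [pdZb_mul (hζ x) (hh x), pdZb_planeAverage_eq_zero p hG hGzb hx, pdZb_zeta_sub]
    ring
  · rw [pdZ_mul (hζ x) (hh x), zeta_sub_mul_pdZ_planeAverage p hG hGzb hx, pdZ_zeta_sub]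
    ring

end PlaneAverage

section ResidualGauge

variable {U : Set V4}

theorem pdC_pdZ_eq_zero {f : V4 → ℂ} (hf : ContDiffOn ℝ ∞ f U) (hU : IsOpen U) {i : Fin 4}
    (h : ∀ y ∈ U, pdC i f y = 0) {x : V4} (hx : x ∈ U) : pdC i (pdZ f) x = 0 := by
  rw [pdC_pdZ hf hU hx, pdZ_congr (g := fun _ => 0) hU h hx]
  simp [pdZ, pdC_const]

/-- Differentiating `∂_ζ̄ a + ∂_ζ b = 0` in `u` turns it into `2 ∂_ζ̄ ∂_ζ l = 0`. -/
theorem pdZb_pdZ_eq_zero_of_gauge {l a b : V4 → ℂ} (hU : IsOpen U) (hl : ContDiffOn ℝ ∞ l U)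
    (ha : ContDiffOn ℝ ∞ a U) (hb : ContDiffOn ℝ ∞ b U)
    (ha' : ∀ y ∈ U, pdC 0 a y = pdZ l y) (hb' : ∀ y ∈ U, pdC 0 b y = pdZb l y)
    (hab : ∀ y ∈ U, pdZb a y + pdZ b y = 0) {x : V4} (hx : x ∈ U) : pdZb (pdZ l) x = 0 := by
  have h := pdC_eq_zero_of_eqOn_zero hU hab hx 0
  rw [pdC_add ((ha.pdZb hU).differentiableAt_of_isOpen hU hx)
    ((hb.pdZ hU).differentiableAt_of_isOpen hU hx), pdC_pdZb ha hU hx, pdC_pdZ hb hU hx,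
    pdZb_congr hU ha' hx, pdZ_congr hU hb' hx, pdZ_pdZb hl hU hx] at h
  linear_combination h / 2

theorem exists_local_pdZ_primitive {g : V4 → ℂ} (hU : IsOpen U) (hg : ContDiffOn ℝ ∞ g U)
    (hgu : ∀ y ∈ U, pdC 0 g y = 0) (hgzb : ∀ y ∈ U, pdZb g y = 0) {p : V4} (hp : p ∈ U) :
    ∃ r > 0, ball p r ⊆ U ∧ ∃ F : V4 → ℂ, ContDiff ℝ ∞ F ∧
      ∀ x ∈ ball p r, pdC 0 F x = 0 ∧ pdZb F x = 0 ∧ pdZ F x = g x := by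
  obtain ⟨r, hr, hrU, G, hG, hGg⟩ := hg.exists_contDiff_eqOn_ball hU hp
  obtain ⟨F, hF, hFG⟩ := exists_pdZ_primitive p hG
    (fun y hy => (pdC_congr isOpen_ball hGg hy 0).trans (hgu y (hrU hy)))
    (fun y hy => (pdZb_congr isOpen_ball hGg hy).trans (hgzb y (hrU hy)))
  exact ⟨r, hr, hrU, F, hF, fun x hx => (hFG x hx).imp_right (And.imp_right (·.trans (hGg hx)))⟩

theorem exists_residualGauge_decomposition {W : Set V4} (hW : IsOpen W) {l n m F : V4 → ℂ}
    (hl : ContDiffOn ℝ ∞ l W) (hn : ContDiffOn ℝ ∞ n W) (hm : ContDiffOn ℝ ∞ m W)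
    (hF : ContDiffOn ℝ ∞ F W) (hlu : ∀ x ∈ W, pdC 0 l x = 0)
    (hmu : ∀ x ∈ W, pdC 0 m x = pdZ l x) (hnu : ∀ x ∈ W, pdC 0 n x + pdC 1 l x = 0)
    (hFu : ∀ x ∈ W, pdC 0 F x = 0) (hFzb : ∀ x ∈ W, pdZb F x = 0)
    (hFz : ∀ x ∈ W, pdZ F x = pdZ l x) :
    ∃ f1 f2 f3 f4 : V4 → ℂ,
      ContDiffOn ℝ ∞ f1 W ∧ ContDiffOn ℝ ∞ f2 W ∧ ContDiffOn ℝ ∞ f3 W ∧ ContDiffOn ℝ ∞ f4 W ∧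
      (∀ x ∈ W, pdC 0 f1 x = 0 ∧ pdZb f1 x = 0) ∧
      (∀ x ∈ W, pdC 0 f2 x = 0 ∧ pdZ f2 x = 0) ∧
      (∀ x ∈ W, pdC 0 f3 x = 0) ∧
      (∀ x ∈ W, pdC 0 f4 x = 0) ∧
      (∀ x ∈ W, l x = f1 x + f2 x) ∧
      (∀ x ∈ W, m x = (x 0 : ℂ) * pdZ f1 x + f3 x) ∧
      (∀ x ∈ W, n x = -((x 0 : ℂ)) * (pdC 1 f1 x + pdC 1 f2 x) + f4 x) := by
  have hu : ContDiff ℝ ∞ fun y : V4 => (y 0 : ℂ) :=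
    Complex.ofRealCLM.contDiff.comp (contDiff_apply ℝ ℝ 0)
  have hdiff {f : V4 → ℂ} (hf : ContDiffOn ℝ ∞ f W) {x : V4} (hx : x ∈ W) :
      DifferentiableAt ℝ f x := hf.differentiableAt_of_isOpen hW hx
  have hdu (x : V4) : DifferentiableAt ℝ (fun y : V4 => (y 0 : ℂ)) x :=
    hu.differentiable (by simp) x
  refine ⟨F, fun y => l y - F y, fun y => m y - (y 0 : ℂ) * pdZ F y,
    fun y => n y + (y 0 : ℂ) * pdC 1 l y, hF, hl.sub hF,
    hm.sub (hu.contDiffOn.mul (hF.pdZ hW)), hn.add (hu.contDiffOn.mul (hl.pdC hW 1)),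
    fun x hx => ⟨hFu x hx, hFzb x hx⟩, fun x hx => ⟨?_, ?_⟩, fun x hx => ?_, fun x hx => ?_,
    fun x _ => by ring, fun x _ => by ring, fun x hx => ?_⟩
  · rw [pdC_sub (hdiff hl hx) (hdiff hF hx), hlu x hx, hFu x hx, sub_zero]
  · rw [pdZ_sub (hdiff hl hx) (hdiff hF hx), hFz x hx, sub_self]
  · rw [pdC_sub (hdiff hm hx) ((hdu x).fun_mul (hdiff (hF.pdZ hW) hx)), pdC_mul (hdu x)
      (hdiff (hF.pdZ hW) hx), pdC_pdZ_eq_zero hF hW hFu hx, pdC_coord, hmu x hx, hFz x hx]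
    simp
  · rw [pdC_add (hdiff hn hx) ((hdu x).fun_mul (hdiff (hl.pdC hW 1) hx)), pdC_mul (hdu x)
      (hdiff (hl.pdC hW 1) hx), pdC_comm hl hW hx, pdC_eq_zero_of_eqOn_zero hW hlu hx,
      pdC_coord, if_pos rfl]
    linear_combination hnu x hx
  · rw [pdC_sub (hdiff hl hx) (hdiff hF hx)]
    ring

end ResidualGauge

theorem stmt14_general (U : Set V4) (hUopen : IsOpen U)
    (ξl ξn : V4 → ℝ) (ξm : V4 → ℂ)
    (hl : ContDiffOn ℝ (⊤ : ℕ∞) ξl U) (hn : ContDiffOn ℝ (⊤ : ℕ∞) ξn U)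
    (hm : ContDiffOn ℝ (⊤ : ℕ∞) ξm U)
    (e1 : ∀ x ∈ U, pdR 0 ξl x = 0)
    (e2 : ∀ x ∈ U, pdC 0 (fun y => (starRingEnd ℂ) (ξm y)) x
      - pdZ (fun y => (ξl y : ℂ)) x = 0)
    (e3 : ∀ x ∈ U, pdC 0 ξm x - pdZb (fun y => (ξl y : ℂ)) x = 0)
    (e4 : ∀ x ∈ U, pdR 0 ξn x + pdR 1 ξl x = 0)
    (e5 : ∀ x ∈ U, pdZb (fun y => (starRingEnd ℂ) (ξm y)) x + pdZ ξm x = 0) :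
    ∀ p ∈ U, ∃ W : Set V4, IsOpen W ∧ p ∈ W ∧ W ⊆ U ∧
      ∃ f1 f2 f3 f4 : V4 → ℂ,
        ContDiffOn ℝ (⊤ : ℕ∞) f1 W ∧ ContDiffOn ℝ (⊤ : ℕ∞) f2 W ∧
        ContDiffOn ℝ (⊤ : ℕ∞) f3 W ∧ ContDiffOn ℝ (⊤ : ℕ∞) f4 W ∧
        (∀ x ∈ W, pdC 0 f1 x = 0 ∧ pdZb f1 x = 0) ∧
        (∀ x ∈ W, pdC 0 f2 x = 0 ∧ pdZ f2 x = 0) ∧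
        (∀ x ∈ W, pdC 0 f3 x = 0) ∧
        (∀ x ∈ W, pdC 0 f4 x = 0) ∧
        (∀ x ∈ W, (ξl x : ℂ) = f1 x + f2 x) ∧
        (∀ x ∈ W, (starRingEnd ℂ) (ξm x) = (x 0 : ℂ) * pdZ f1 x + f3 x) ∧
        (∀ x ∈ W, (ξn x : ℂ) =
          -((x 0 : ℂ)) * (pdC 1 f1 x + pdC 1 f2 x) + f4 x) := by
  intro p hp
  have hlC : ContDiffOn ℝ ∞ (fun y => (ξl y : ℂ)) U := Complex.ofRealCLM.contDiff.comp_contDiffOn hl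
  have hnC : ContDiffOn ℝ ∞ (fun y => (ξn y : ℂ)) U := Complex.ofRealCLM.contDiff.comp_contDiffOn hn
  have hmC : ContDiffOn ℝ ∞ (fun y => (starRingEnd ℂ) (ξm y)) U :=
    Complex.conjCLE.contDiff.comp_contDiffOn hm
  have hpdC {f : V4 → ℝ} (hf : ContDiffOn ℝ ∞ f U) (i : Fin 4) {x : V4} (hx : x ∈ U) :
      pdC i (fun y => (f y : ℂ)) x = pdR i f x :=
    pdC_ofReal (hf.differentiableAt_of_isOpen hUopen hx) i
  have hlu : ∀ x ∈ U, pdC 0 (fun y => (ξl y : ℂ)) x = 0 := fun x hx => by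
    rw [hpdC hl 0 hx, e1 x hx, Complex.ofReal_zero]
  obtain ⟨r, hr, hrU, F, hF, hFprim⟩ := exists_local_pdZ_primitive hUopen (hlC.pdZ hUopen)
    (fun x hx => pdC_pdZ_eq_zero hlC hUopen hlu hx)
    (fun x hx => pdZb_pdZ_eq_zero_of_gauge hUopen hlC hmC hm (fun y hy => sub_eq_zero.1 (e2 y hy))
      (fun y hy => sub_eq_zero.1 (e3 y hy)) e5 hx) hp
  refine ⟨ball p r, isOpen_ball, mem_ball_self hr, hrU,
    exists_residualGauge_decomposition isOpen_ball (hlC.mono hrU) (hnC.mono hrU) (hmC.mono hrU)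
      hF.contDiffOn (fun x hx => hlu x (hrU hx)) (fun x hx => sub_eq_zero.1 (e2 x (hrU hx)))
      (fun x hx => ?_) (fun x hx => (hFprim x hx).1) (fun x hx => (hFprim x hx).2.1)
      (fun x hx => (hFprim x hx).2.2)⟩
  rw [hpdC hn 0 (hrU hx), hpdC hl 1 (hrU hx)]
  exact_mod_cast e4 x (hrU hx)

/-- General local form of the residual radiation-gauge vectors on a pp-wave
background. -/
theorem stmt14 (U : Set V4) (hUopen : IsOpen U) (hUconv : Convex ℝ U)
    (ξl ξn : V4 → ℝ) (ξm : V4 → ℂ)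
    (hl : ContDiffOn ℝ (⊤ : ℕ∞) ξl U) (hn : ContDiffOn ℝ (⊤ : ℕ∞) ξn U)
    (hm : ContDiffOn ℝ (⊤ : ℕ∞) ξm U)
    (e1 : ∀ x ∈ U, pdR 0 ξl x = 0)
    (e2 : ∀ x ∈ U, pdC 0 (fun y => (starRingEnd ℂ) (ξm y)) x
      - pdZ (fun y => (ξl y : ℂ)) x = 0)
    (e3 : ∀ x ∈ U, pdC 0 ξm x - pdZb (fun y => (ξl y : ℂ)) x = 0)
    (e4 : ∀ x ∈ U, pdR 0 ξn x + pdR 1 ξl x = 0)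
    (e5 : ∀ x ∈ U, pdZb (fun y => (starRingEnd ℂ) (ξm y)) x + pdZ ξm x = 0) :
    ∀ p ∈ U, ∃ W : Set V4, IsOpen W ∧ p ∈ W ∧ W ⊆ U ∧
      ∃ f1 f2 f3 f4 : V4 → ℂ,
        ContDiffOn ℝ (⊤ : ℕ∞) f1 W ∧ ContDiffOn ℝ (⊤ : ℕ∞) f2 W ∧
        ContDiffOn ℝ (⊤ : ℕ∞) f3 W ∧ ContDiffOn ℝ (⊤ : ℕ∞) f4 W ∧
        (∀ x ∈ W, pdC 0 f1 x = 0 ∧ pdZb f1 x = 0) ∧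
        (∀ x ∈ W, pdC 0 f2 x = 0 ∧ pdZ f2 x = 0) ∧
        (∀ x ∈ W, pdC 0 f3 x = 0) ∧
        (∀ x ∈ W, pdC 0 f4 x = 0) ∧
        (∀ x ∈ W, (ξl x : ℂ) = f1 x + f2 x) ∧
        (∀ x ∈ W, (starRingEnd ℂ) (ξm x) = (x 0 : ℂ) * pdZ f1 x + f3 x) ∧
        (∀ x ∈ W, (ξn x : ℂ) =
          -((x 0 : ℂ)) * (pdC 1 f1 x + pdC 1 f2 x) + f4 x) :=
  stmt14_general U hUopen ξl ξn ξm hl hn hm e1 e2 e3 e4 e5
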